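/- arXiv:1204.5229 — 4 statements merged into one kernel-verified Lean document; each statement's English description precedes it below -/
import Mathlib

section
/- Let α be a linear order, m ≥ 1, X : Fin (5*m) → α, and let (t_i)_{i<m} be a family of group medians for X. Suppose x : α is a median of the medians, i.e., |{i < m : t_i ≤ x}| ≥ ⌈m/2⌉ and |{i < m : x ≤ t_i}| ≥ ⌈m/2⌉. Then 3·⌈m/2⌉ ≤ |{j : X j ≤ x}| and |{j : X j < x}| ≤ 5m − 3·⌈m/2⌉. (Hence the median of the group medians has rank between roughly 3n/10 and 7n/10 in the array of n = 5m elements.) -/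
/-!
Every group whose median is `≤ x` contributes at least three elements `≤ x`, and the groups are
disjoint, so at least `3⌈m/2⌉` elements are `≤ x`. Dually at least `3⌈m/2⌉` elements are `≥ x`,
which leaves at most `5m - 3⌈m/2⌉` elements `< x`.
-/

/-- The `i`-th group of indices of an array of size `5 * m`:
the indices `5i, 5i+1, 5i+2, 5i+3, 5i+4`. -/
def group (m : ℕ) (i : Fin m) : Finset (Fin (5 * m)) :=
  Finset.univ.filter fun j => 5 * (i : ℕ) ≤ (j : ℕ) ∧ (j : ℕ) < 5 * (i : ℕ) + 5

/-- `t` is a median of group `i` of `X`: at least `3` elements of the group are `≤ t`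
and at least `3` elements of the group are `≥ t`. -/
def IsGroupMedian {α : Type*} [LinearOrder α] {m : ℕ}
    (X : Fin (5 * m) → α) (i : Fin m) (t : α) : Prop :=
  3 ≤ ((group m i).filter fun j => X j ≤ t).card ∧
  3 ≤ ((group m i).filter fun j => t ≤ X j).card

open Finset OrderDual

lemma pairwiseDisjoint_group (m : ℕ) : (Set.univ : Set (Fin m)).PairwiseDisjoint (group m) := by
  intro i _ i' _ hii'
  rw [Function.onFun, Finset.disjoint_left]
  intro j hj hj'
  simp only [group, mem_filter] at hj hj'
  exact hii' (Fin.ext (by omega))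

lemma mul_card_le_card_filter {m k : ℕ} (p : Fin (5 * m) → Prop) [DecidablePred p]
    (S : Finset (Fin m)) (hS : ∀ i ∈ S, k ≤ #((group m i).filter p)) :
    k * #S ≤ #(univ.filter p) :=
  calc k * #S ≤ ∑ i ∈ S, #((group m i).filter p) := by
        simpa [mul_comm] using S.card_nsmul_le_sum _ k hS
    _ = #((S.biUnion (group m)).filter p) := by
        rw [filter_biUnion, card_biUnion]
        exact fun i _ i' _ hii' =>
          disjoint_filter_filter (pairwiseDisjoint_group m (Set.mem_univ i) (Set.mem_univ i') hii')
    _ ≤ #(univ.filter p) := card_le_card (filter_subset_filter _ (subset_univ _))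

section Median

variable {α : Type*} [LinearOrder α] {m : ℕ} {X : Fin (5 * m) → α}

lemma IsGroupMedian.dual {i : Fin m} {t : α} (h : IsGroupMedian X i t) :
    IsGroupMedian (toDual ∘ X) i (toDual t) :=
  h.symm

lemma IsGroupMedian.three_le_card_filter_le {i : Fin m} {t x : α} (h : IsGroupMedian X i t)
    (htx : t ≤ x) : 3 ≤ #((group m i).filter fun j => X j ≤ x) :=
  h.1.trans (card_le_card (monotone_filter_right _ fun _ _ hj => hj.trans htx))

lemma three_mul_card_filter_median_le {t : Fin m → α} (ht : ∀ i, IsGroupMedian X i (t i))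
    (x : α) : 3 * #(univ.filter fun i => t i ≤ x) ≤ #(univ.filter fun j => X j ≤ x) :=
  mul_card_le_card_filter _ _ fun i hi => (ht i).three_le_card_filter_le (mem_filter.1 hi).2

lemma three_mul_card_filter_le_median {t : Fin m → α} (ht : ∀ i, IsGroupMedian X i (t i))
    (x : α) : 3 * #(univ.filter fun i => x ≤ t i) ≤ #(univ.filter fun j => x ≤ X j) :=
  three_mul_card_filter_median_le (X := toDual ∘ X) (t := toDual ∘ t) (fun i => (ht i).dual)
    (toDual x)

end Median

lemma card_filter_lt_eq_sub {α : Type*} [LinearOrder α] {n : ℕ} (X : Fin n → α) (x : α) :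
    #(univ.filter fun j => X j < x) = n - #(univ.filter fun j => x ≤ X j) := by
  have := card_filter_add_card_filter_not (s := univ) fun j => x ≤ X j
  simp only [not_le, card_univ, Fintype.card_fin] at this
  omega

theorem median_of_medians_rank_general {α : Type*} [LinearOrder α] {m : ℕ}
    (X : Fin (5 * m) → α) (t : Fin m → α)
    (ht : ∀ i : Fin m, IsGroupMedian X i (t i)) (x : α)
    (hle : (m + 1) / 2 ≤ (Finset.univ.filter fun i : Fin m => t i ≤ x).card)
    (hge : (m + 1) / 2 ≤ (Finset.univ.filter fun i : Fin m => x ≤ t i).card) :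
    3 * ((m + 1) / 2) ≤ (Finset.univ.filter fun j : Fin (5 * m) => X j ≤ x).card ∧
    (Finset.univ.filter fun j : Fin (5 * m) => X j < x).card ≤ 5 * m - 3 * ((m + 1) / 2) := by
  refine ⟨(Nat.mul_le_mul_left 3 hle).trans (three_mul_card_filter_median_le ht x), ?_⟩
  rw [card_filter_lt_eq_sub]
  exact Nat.sub_le_sub_left ((Nat.mul_le_mul_left 3 hge).trans
    (three_mul_card_filter_le_median ht x)) _

/-- A median `x` of the group medians has rank between roughly `3n/10` and `7n/10`
in the array of `n = 5m` elements. -/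
theorem median_of_medians_rank {α : Type*} [LinearOrder α] {m : ℕ} (hm : 1 ≤ m)
    (X : Fin (5 * m) → α) (t : Fin m → α)
    (ht : ∀ i : Fin m, IsGroupMedian X i (t i)) (x : α)
    (hle : (m + 1) / 2 ≤ (Finset.univ.filter fun i : Fin m => t i ≤ x).card)
    (hge : (m + 1) / 2 ≤ (Finset.univ.filter fun i : Fin m => x ≤ t i).card) :
    3 * ((m + 1) / 2) ≤ (Finset.univ.filter fun j : Fin (5 * m) => X j ≤ x).card ∧
    (Finset.univ.filter fun j : Fin (5 * m) => X j < x).card ≤ 5 * m - 3 * ((m + 1) / 2) :=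
  median_of_medians_rank_general X t ht x hle hge
end

section
/- Let α be a linear order, m ≥ 1, X : Fin (5*m) → α, and let (t_i)_{i<m} be a family of group medians for X. Suppose x : α satisfies |{i < m : t_i ≤ x}| ≥ ⌈m/2⌉ and |{i < m : x ≤ t_i}| ≥ ⌈m/2⌉. Let Y : Fin (5*m) → α be an array differing from X in at most β positions (a corrupted copy of X). Then 3·⌈m/2⌉ − β ≤ (|{j : Y j ≤ x}| : ℤ) and (|{j : Y j < x}| : ℤ) ≤ 5m − 3·⌈m/2⌉ + β. (This is the combinatorial core of the claim that, after at most β corruptions, an uncorrupted median of medians still has rank between roughly 3n/10 − β and 7n/10 + β.) -/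
open Finset Function

lemma card_filter_le_card_filter_add_card_ne {ι α : Type*} [Fintype ι] [DecidableEq ι]
    [DecidableEq α] (p : α → Prop) [DecidablePred p] (X Y : ι → α) :
    #{j | p (X j)} ≤ #{j | p (Y j)} + #{j | X j ≠ Y j} := by
  refine (card_le_card fun j hj => ?_).trans (card_union_le _ _)
  by_cases hXY : X j = Y j <;> simp_all

lemma mul_card_le_card_filter_of_pairwiseDisjoint {ι β : Type*} [Fintype β] [DecidableEq β]
    {s : Finset ι} {g : ι → Finset β} (hg : (s : Set ι).PairwiseDisjoint g)
    (p : β → Prop) [DecidablePred p] {k : ℕ} (hk : ∀ i ∈ s, k ≤ #{j ∈ g i | p j}) :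
    k * #s ≤ #{j | p j} :=
  calc k * #s = #s • k := mul_comm _ _
    _ ≤ ∑ i ∈ s, #{j ∈ g i | p j} := card_nsmul_le_sum s _ k hk
    _ = #(s.biUnion fun i => {j ∈ g i | p j}) :=
        (card_biUnion (hg.mono fun _ => filter_subset _ _)).symm
    _ ≤ #{j | p j} := card_le_card fun j hj => by
        obtain ⟨i, -, hj⟩ := mem_biUnion.mp hj
        simpa using (mem_filter.mp hj).2

lemma pairwise_disjoint_group (m : ℕ) : Pairwise (Disjoint on (group m)) := by
  intro i i' hii'
  refine disjoint_left.mpr fun j hj hj' => hii' (Fin.ext ?_)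
  simp only [group, mem_filter] at hj hj'
  omega

section Medians

variable {α : Type*} [LinearOrder α] {m : ℕ} {X : Fin (5 * m) → α} {t : Fin m → α}

lemma three_mul_card_medians_le_le_card_le (ht : ∀ i, IsGroupMedian X i (t i)) (x : α) :
    3 * #{i | t i ≤ x} ≤ #{j | X j ≤ x} :=
  mul_card_le_card_filter_of_pairwiseDisjoint ((pairwise_disjoint_group m).set_pairwise _) _
    fun i hi => (ht i).1.trans <| card_le_card <| monotone_filter_right _
      fun _ _ hj => hj.trans (mem_filter.mp hi).2

lemma three_mul_card_le_medians_le_card_le (ht : ∀ i, IsGroupMedian X i (t i)) (x : α) :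
    3 * #{i | x ≤ t i} ≤ #{j | x ≤ X j} :=
  mul_card_le_card_filter_of_pairwiseDisjoint ((pairwise_disjoint_group m).set_pairwise _) _
    fun i hi => (ht i).2.trans <| card_le_card <| monotone_filter_right _
      fun _ _ hj => (mem_filter.mp hi).2.trans hj

end Medians

theorem median_of_medians_rank_corrupted_general {α : Type*} [LinearOrder α] {m : ℕ}
    (X : Fin (5 * m) → α) (t : Fin m → α)
    (ht : ∀ i : Fin m, IsGroupMedian X i (t i)) (x : α)
    (hle : (m + 1) / 2 ≤ (Finset.univ.filter fun i : Fin m => t i ≤ x).card)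
    (hge : (m + 1) / 2 ≤ (Finset.univ.filter fun i : Fin m => x ≤ t i).card)
    (Y : Fin (5 * m) → α) (β : ℕ)
    (hY : (Finset.univ.filter fun i : Fin (5 * m) => X i ≠ Y i).card ≤ β) :
    (3 * ((m + 1) / 2) : ℤ) - β ≤
        ((Finset.univ.filter fun j : Fin (5 * m) => Y j ≤ x).card : ℤ) ∧
    ((Finset.univ.filter fun j : Fin (5 * m) => Y j < x).card : ℤ) ≤
        5 * m - 3 * ((m + 1) / 2 : ℕ) + β := by
  have hX_le := three_mul_card_medians_le_le_card_le ht x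
  have hX_ge := three_mul_card_le_medians_le_card_le ht x
  have hX_split : #{j | X j < x} + #{j | x ≤ X j} = 5 * m := by
    simpa using card_filter_add_card_filter_not (s := univ) fun j => X j < x
  have hY_le := card_filter_le_card_filter_add_card_ne (· ≤ x) X Y
  have hY_lt := card_filter_le_card_filter_add_card_ne (· < x) Y X
  simp only [ne_comm (a := Y _)] at hY_lt
  omega

/-- After at most `β` corruptions, an uncorrupted median of medians still has rank
between roughly `3n/10 - β` and `7n/10 + β` in the corrupted array `Y`. -/
theorem median_of_medians_rank_corrupted {α : Type*} [LinearOrder α] {m : ℕ} (hm : 1 ≤ m)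
    (X : Fin (5 * m) → α) (t : Fin m → α)
    (ht : ∀ i : Fin m, IsGroupMedian X i (t i)) (x : α)
    (hle : (m + 1) / 2 ≤ (Finset.univ.filter fun i : Fin m => t i ≤ x).card)
    (hge : (m + 1) / 2 ≤ (Finset.univ.filter fun i : Fin m => x ≤ t i).card)
    (Y : Fin (5 * m) → α) (β : ℕ)
    (hY : (Finset.univ.filter fun i : Fin (5 * m) => X i ≠ Y i).card ≤ β) :
    (3 * ((m + 1) / 2) : ℤ) - β ≤
        ((Finset.univ.filter fun j : Fin (5 * m) => Y j ≤ x).card : ℤ) ∧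
    ((Finset.univ.filter fun j : Fin (5 * m) => Y j < x).card : ℤ) ≤
        5 * m - 3 * ((m + 1) / 2 : ℕ) + β :=
  median_of_medians_rank_corrupted_general X t ht x hle hge Y β hY
end

section
/- Let C, n₀ : ℕ and let T : ℕ → ℕ satisfy the recurrence T(n) ≤ T(⌈n/5⌉) + T(⌈7n/10⌉ + ⌈n/11⌉ + 6) + C·n for all n ≥ n₀. Then T is linearly bounded: there exists D : ℕ such that T(n) ≤ D·(n + 1) for all n : ℕ. (This is the running-time recurrence of the deterministic resilient selection algorithm; its linear solution gives the O(n) time bound in the fault-free case.) -/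
/-!
Strong induction with `D := max (max_{n < N} T n) (k * C)`: past the threshold `N`, the two
recursive calls cost at most `D * (f n + g n + 2)`, and the margin `f n + g n + 2 ≤ (1 - 1/k) n`
leaves room `D * n / k ≥ C * n` for the linear term. For the selection recurrence
`1/5 + 7/10 + 1/11 = 109/110 < 1`, so `k = 220` works once `n` swamps the additive constants.
-/

open Finset

theorem le_mul_succ_of_le_add_of_margin {T f g : ℕ → ℕ} {C N k : ℕ}
    (hT : ∀ n, N ≤ n → T n ≤ T (f n) + T (g n) + C * n)
    (hmargin : ∀ n, N ≤ n → k * (f n + g n + 2) + n ≤ k * n) (n : ℕ) :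
    T n ≤ max ((range N).sup T) (k * C) * (n + 1) := by
  set D := max ((range N).sup T) (k * C)
  have hk : 0 < k := Nat.pos_of_ne_zero fun hk => by
    simpa [hk] using hmargin (N + 1) (Nat.le_succ N)
  induction n using Nat.strong_induction_on with
  | _ n ih =>
    rcases lt_or_ge n N with hn | hn
    · calc T n ≤ (range N).sup T := le_sup (mem_range.mpr hn)
        _ ≤ D := le_max_left _ _
        _ ≤ D * (n + 1) := Nat.le_mul_of_pos_right _ n.succ_pos
    have hm := hmargin n hn
    have hlt : f n + g n + 2 < n :=
      Nat.lt_of_mul_lt_mul_left (a := k) (by nlinarith)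
    have hlinear : k * (D * (f n + g n + 2) + C * n) ≤ k * (D * n) := by
      have hCD : k * C * n ≤ D * n := Nat.mul_le_mul_right _ (le_max_right _ _)
      calc k * (D * (f n + g n + 2) + C * n)
          = D * (k * (f n + g n + 2)) + k * C * n := by ring
        _ ≤ D * (k * (f n + g n + 2)) + D * n := by omega
        _ = D * (k * (f n + g n + 2) + n) := by ring
        _ ≤ D * (k * n) := Nat.mul_le_mul_left _ hm
        _ = k * (D * n) := by ring
    calc T n ≤ T (f n) + T (g n) + C * n := hT n hn
      _ ≤ D * (f n + 1) + D * (g n + 1) + C * n := by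
          gcongr <;> exact ih _ (by omega)
      _ = D * (f n + g n + 2) + C * n := by ring
      _ ≤ D * n := Nat.le_of_mul_le_mul_left hlinear hk
      _ ≤ D * (n + 1) := Nat.mul_le_mul_left _ n.le_succ

theorem select_split_margin {n : ℕ} (hn : 2400 ≤ n) :
    220 * ((n + 4) / 5 + ((7 * n + 9) / 10 + (n + 10) / 11 + 6) + 2) + n ≤ 220 * n := by
  omega

/-- The running-time recurrence `T(n) ≤ T(⌈n/5⌉) + T(⌈7n/10⌉ + ⌈n/11⌉ + 6) + C·n`
(for all `n ≥ n₀`) has a linear solution. -/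
theorem select_recurrence_linear (C n₀ : ℕ) (T : ℕ → ℕ)
    (hT : ∀ n, n₀ ≤ n → T n ≤ T ((n + 4) / 5) + T ((7 * n + 9) / 10 + (n + 10) / 11 + 6) + C * n) :
    ∃ D : ℕ, ∀ n, T n ≤ D * (n + 1) :=
  ⟨_, le_mul_succ_of_le_add_of_margin (N := max n₀ 2400)
    (fun n hn => hT n (le_of_max_le_left hn))
    (fun _ hn => select_split_margin (le_of_max_le_right hn))⟩
end

section
/- Let L : ℕ and let i, j : ℕ satisfy i < j < 2^L. Then there exists d with 1 ≤ d ≤ L such that i / 2^(L−d+1) = j / 2^(L−d+1) and j / 2^(L−d) = i / 2^(L−d) + 1 (natural-number division). (This is the structural fact behind the correctness of the iterative resilient Quicksort: for any two positions i < j in an array of length 2^L there is a round d of the doubling loop at which i and j lie in the same block of size 2^(L−d+1) but i lies in its left half and j in its right half, so the split at that round places the smaller uncorrupted element before the larger one permanently.) -/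
/-!
Let `k` be the last level at which the prefixes `i / 2^k` and `j / 2^k` still differ; such a
level exists below `L` because at level `0` they differ (`i < j`) and at level `L` both are `0`.
One level up they agree, and two numbers `a < b` with `a / 2 = b / 2` satisfy `b = a + 1`.
The round is `d = L - k`.
-/

theorem Nat.exists_lt_and_not_succ_of_zero_of_not {P : ℕ → Prop} {n : ℕ} (h₀ : P 0)
    (hn : ¬ P n) : ∃ k < n, P k ∧ ¬ P (k + 1) := by
  induction n with
  | zero => exact absurd h₀ hn
  | succ n ih =>
    by_cases hPn : P n
    · exact ⟨n, n.lt_succ_self, hPn, hn⟩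
    · obtain ⟨k, hk, hPk, hPk'⟩ := ih hPn
      exact ⟨k, hk.trans n.lt_succ_self, hPk, hPk'⟩

theorem Nat.eq_add_one_of_lt_of_div_two_eq {a b : ℕ} (hab : a < b) (h : a / 2 = b / 2) :
    b = a + 1 := by
  omega

theorem Nat.div_two_pow_succ (a k : ℕ) : a / 2 ^ (k + 1) = a / 2 ^ k / 2 := by
  rw [Nat.div_div_eq_div_mul, pow_succ]

theorem Nat.exists_dyadic_split_level {L i j : ℕ} (hij : i < j) (hj : j < 2 ^ L) :
    ∃ k < L, i / 2 ^ (k + 1) = j / 2 ^ (k + 1) ∧ j / 2 ^ k = i / 2 ^ k + 1 := by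
  have hL : ¬ i / 2 ^ L < j / 2 ^ L := by
    simp [Nat.div_eq_of_lt hj, Nat.div_eq_of_lt (hij.trans hj)]
  obtain ⟨k, hkL, hlt, hnlt⟩ :=
    Nat.exists_lt_and_not_succ_of_zero_of_not (P := fun k => i / 2 ^ k < j / 2 ^ k)
      (by simpa using hij) hL
  have hagree : i / 2 ^ (k + 1) = j / 2 ^ (k + 1) :=
    le_antisymm (Nat.div_le_div_right hij.le) (not_lt.mp hnlt)
  refine ⟨k, hkL, hagree, Nat.eq_add_one_of_lt_of_div_two_eq hlt ?_⟩
  rwa [← Nat.div_two_pow_succ, ← Nat.div_two_pow_succ]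

/-- For any two positions `i < j` in an array of length `2^L`, there is a round `d`
of the doubling loop at which `i` and `j` lie in the same block of size `2^(L-d+1)`,
with `i` in its left half and `j` in its right half. -/
theorem quicksort_split_round (L i j : ℕ) (hij : i < j) (hj : j < 2 ^ L) :
    ∃ d : ℕ, 1 ≤ d ∧ d ≤ L ∧
      i / 2 ^ (L - d + 1) = j / 2 ^ (L - d + 1) ∧
      j / 2 ^ (L - d) = i / 2 ^ (L - d) + 1 := by
  obtain ⟨k, hkL, hagree, hsplit⟩ := Nat.exists_dyadic_split_level hij hj
  have hLk : L - (L - k) = k := by omega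
  exact ⟨L - k, by omega, by omega, by rwa [hLk], by rwa [hLk]⟩
end
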